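/- arXiv:2403.19759 — 3 statements merged into one kernel-verified Lean document; each statement's English description precedes it below -/
import Mathlib

section
/- Let V and H be infinite-dimensional separable complex Hilbert spaces, let i : V → H be an injective, compact, continuous linear map with dense range, and let (λ_n)_{n≥1}, (u_n)_{n≥1} be a spectral system for (V, H, i). Then for any u ∈ V with ‖i u‖_H = 1, the identity ⟪u, v⟫_V = λ_1 ⟪i u, i v⟫_H holds for all v ∈ V if and only if ‖u‖²_V = λ_1. -/
open scoped InnerProductSpace

/-- **Characterization of principal eigenfunctions** (equality case in Theorem 2 of the paper).
Given a spectral system `(lam, u)` for `(V, H, i)` — i.e. `lam` is a nondecreasing sequence of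
strictly positive reals tending to `∞`, `(i (u n))` is a Hilbert basis of `H` and
`⟪u n, v⟫_V = lam n ⟪i (u n), i v⟫_H` for all `v` — then for any `w ∈ V` with `‖i w‖ = 1`,
`w` satisfies `⟪w, v⟫_V = λ₁ ⟪i w, i v⟫_H` for all `v ∈ V` iff `‖w‖² = λ₁`. -/
theorem principal_eigenfunction_characterization
    {V H : Type*}
    [NormedAddCommGroup V] [InnerProductSpace ℂ V] [CompleteSpace V]
    [NormedAddCommGroup H] [InnerProductSpace ℂ H] [CompleteSpace H]
    [TopologicalSpace.SeparableSpace V] [TopologicalSpace.SeparableSpace H]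
    (hVinf : ¬ FiniteDimensional ℂ V) (hHinf : ¬ FiniteDimensional ℂ H)
    (i : V →L[ℂ] H) (hinj : Function.Injective i)
    (hcomp : IsCompactOperator i) (hdense : DenseRange i)
    (lam : ℕ → ℝ) (u : ℕ → V)
    (hmono : Monotone lam) (hpos : ∀ n, 0 < lam n)
    (htend : Filter.Tendsto lam Filter.atTop Filter.atTop)
    (hbasis : ∃ b : HilbertBasis ℕ ℂ H, ∀ n, b n = i (u n))
    (heigen : ∀ n, ∀ v : V, ⟪u n, v⟫_ℂ = (lam n : ℂ) * ⟪i (u n), i v⟫_ℂ) :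
    ∀ w : V, ‖i w‖ = 1 →
      ((∀ v : V, ⟪w, v⟫_ℂ = (lam 0 : ℂ) * ⟪i w, i v⟫_ℂ) ↔ ‖w‖ ^ 2 = lam 0) := by
  obtain ⟨b, hb⟩ := hbasis
  intro w hw
  constructor
  · -- forward direction: test with v = w
    intro hid
    have h := hid w
    rw [inner_self_eq_norm_sq_to_K, inner_self_eq_norm_sq_to_K, hw] at h
    have h' : ((‖w‖ ^ 2 : ℝ) : ℂ) = ((lam 0 : ℝ) : ℂ) := by push_cast; simpa using h
    exact_mod_cast h'
  · -- backward direction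
    intro hnorm
    -- the real square roots
    set s : ℕ → ℂ := fun n => ((Real.sqrt (lam n) : ℝ) : ℂ) with hs
    have hs_sq : ∀ n, s n * s n = (lam n : ℂ) := by
      intro n
      simp only [hs]
      rw [← Complex.ofReal_mul, Real.mul_self_sqrt (hpos n).le]
    have hs_ne : ∀ n, s n ≠ 0 := by
      intro n hzero
      have := hs_sq n
      rw [hzero, mul_zero] at this
      exact_mod_cast (hpos n).ne' (by exact_mod_cast this.symm)
    -- the rescaled family in V
    set e : ℕ → V := fun n => (s n)⁻¹ • u n with he
    have hinner_u : ∀ n (x : V), ⟪u n, x⟫_ℂ = (lam n : ℂ) * ⟪b n, i x⟫_ℂ := by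
      intro n x
      rw [heigen n x, hb n]
    have hinner_e : ∀ n (x : V), ⟪e n, x⟫_ℂ = (s n)⁻¹ * ((lam n : ℂ) * ⟪b n, i x⟫_ℂ) := by
      intro n x
      rw [he]
      simp only [inner_smul_left, map_inv₀, hinner_u]
      congr 1
      simp [hs]
    -- orthonormality of e
    have he_on : Orthonormal ℂ e := by
      rw [orthonormal_iff_ite]
      intro m n
      have hbmn : ⟪(b m : H), b n⟫_ℂ = if m = n then 1 else 0 :=
        orthonormal_iff_ite.mp b.orthonormal m n
      have hthis : ⟪e m, e n⟫_ℂ = (s m)⁻¹ * ((s n)⁻¹ * ((lam m : ℂ) * ⟪b m, b n⟫_ℂ)) := by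
        rw [he]
        simp only [inner_smul_left, inner_smul_right]
        rw [hinner_u m (u n), ← hb n]
        simp only [hs, map_inv₀, Complex.conj_ofReal]
        ring
      rw [hthis, hbmn]
      by_cases hmn : m = n
      · subst hmn
        rw [if_pos rfl, mul_one, ← hs_sq m, ← mul_assoc, ← mul_inv]
        exact inv_mul_cancel₀ (mul_ne_zero (hs_ne m) (hs_ne m))
      · simp [hmn]
    -- e is a Hilbert basis (maximality from injectivity of i and b being a basis of H)
    have hsp : (Submodule.span ℂ (Set.range e))ᗮ = ⊥ := by
      rw [Submodule.eq_bot_iff]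
      intro x hx
      have hz : ∀ n, ⟪e n, x⟫_ℂ = 0 := fun n =>
        ((Submodule.span ℂ (Set.range e)).mem_orthogonal x).mp hx _
          (Submodule.subset_span (Set.mem_range_self n))
      have hb0 : ∀ n, ⟪(b n : H), i x⟫_ℂ = 0 := by
        intro n
        have := hz n
        rw [hinner_e n x] at this
        have hl : (lam n : ℂ) ≠ 0 := by exact_mod_cast (hpos n).ne'
        rcases mul_eq_zero.mp this with h1 | h1
        · exact absurd h1 (inv_ne_zero (hs_ne n))
        · rcases mul_eq_zero.mp h1 with h2 | h2
          · exact absurd h2 hl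
          · exact h2
      have : i x = 0 := by
        have : b.repr (i x) = 0 := by
          ext n
          rw [b.repr_apply_apply]
          simpa using hb0 n
        have := congrArg b.repr.symm this
        simpa using this
      have : i x = i 0 := by simpa using this
      exact hinj this
    let B : HilbertBasis ℕ ℂ V := HilbertBasis.mkOfOrthogonalEqBot he_on hsp
    have hB : ⇑B = e := HilbertBasis.coe_mkOfOrthogonalEqBot he_on hsp
    -- coefficients
    set c : ℕ → ℂ := fun n => ⟪(b n : H), i w⟫_ℂ with hc
    have hBw : ∀ n, ⟪(B n : V), w⟫_ℂ = (s n)⁻¹ * ((lam n : ℂ) * c n) := by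
      intro n; rw [hB]; exact hinner_e n w
    -- Parseval in V
    have hsum1 : HasSum (fun n => ⟪w, B n⟫_ℂ * ⟪(B n : V), w⟫_ℂ) ⟪w, w⟫_ℂ :=
      B.hasSum_inner_mul_inner w w
    -- Parseval in H
    have hsum2 : HasSum (fun n => ⟪i w, b n⟫_ℂ * ⟪(b n : H), i w⟫_ℂ) ⟪i w, i w⟫_ℂ :=
      b.hasSum_inner_mul_inner (i w) (i w)
    -- rewrite terms as real quantities
    set r : ℕ → ℝ := fun n => ‖c n‖ ^ 2 with hr
    have hterm2 : (fun n => ⟪i w, b n⟫_ℂ * ⟪(b n : H), i w⟫_ℂ) = fun n => ((r n : ℝ) : ℂ) := by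
      funext n
      rw [← inner_conj_symm (i w) (b n), RCLike.conj_mul]
      simp only [hr, hc]
      norm_cast
    have hterm1 : (fun n => ⟪w, B n⟫_ℂ * ⟪(B n : V), w⟫_ℂ)
        = fun n => (((lam n * r n : ℝ)) : ℂ) := by
      funext n
      rw [← inner_conj_symm w (B n), hBw n]
      have : (starRingEnd ℂ) ((s n)⁻¹ * ((lam n : ℂ) * c n))
          = (s n)⁻¹ * ((lam n : ℂ) * (starRingEnd ℂ) (c n)) := by
        simp [hs, map_mul]
      rw [this]
      have hcc : (starRingEnd ℂ) (c n) * c n = ((r n : ℝ) : ℂ) := by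
        rw [RCLike.conj_mul]; simp only [hr]; norm_cast
      have hssq : (s n)⁻¹ * (s n)⁻¹ * (lam n : ℂ) = 1 := by
        rw [← hs_sq n, ← mul_inv]
        exact inv_mul_cancel₀ (mul_ne_zero (hs_ne n) (hs_ne n))
      push_cast
      calc (s n)⁻¹ * ((lam n : ℂ) * (starRingEnd ℂ) (c n)) * ((s n)⁻¹ * ((lam n : ℂ) * c n))
          = ((s n)⁻¹ * (s n)⁻¹ * (lam n : ℂ)) * ((lam n : ℂ) * ((starRingEnd ℂ) (c n) * c n)) := by
            ring
        _ = (lam n : ℂ) * ((r n : ℝ) : ℂ) := by rw [hssq, hcc, one_mul]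
    have hww : ⟪w, w⟫_ℂ = ((lam 0 : ℝ) : ℂ) := by
      rw [inner_self_eq_norm_sq_to_K, ← hnorm]
      norm_cast
    have hiwiw : ⟪i w, i w⟫_ℂ = ((1 : ℝ) : ℂ) := by
      rw [inner_self_eq_norm_sq_to_K, hw]; norm_num
    rw [hterm1, hww] at hsum1
    rw [hterm2, hiwiw] at hsum2
    have hsum1' : HasSum (fun n => lam n * r n) (lam 0) := Complex.hasSum_ofReal.mp hsum1
    have hsum2' : HasSum r 1 := Complex.hasSum_ofReal.mp hsum2
    -- the gap sequence sums to zero and is nonnegative, so vanishes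
    have hgap : HasSum (fun n => (lam n - lam 0) * r n) 0 := by
      have := hsum1'.sub (hsum2'.mul_left (lam 0))
      simpa [sub_mul, mul_one] using this
    have hgap_nonneg : ∀ n, 0 ≤ (lam n - lam 0) * r n := fun n =>
      mul_nonneg (sub_nonneg.mpr (hmono (Nat.zero_le n))) (by positivity)
    have hgap_zero : ∀ n, (lam n - lam 0) * r n = 0 := by
      have := (hasSum_zero_iff_of_nonneg hgap_nonneg).mp hgap
      intro n; exact congrFun this n
    -- hence lam n * c n = lam 0 * c n for every n
    have hkey : ∀ n, (lam n : ℂ) * c n = (lam 0 : ℂ) * c n := by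
      intro n
      by_cases hcn : c n = 0
      · rw [hcn, mul_zero, mul_zero]
      · have hrn : r n ≠ 0 := pow_ne_zero 2 (norm_ne_zero_iff.mpr hcn)
        have : lam n - lam 0 = 0 := by
          rcases mul_eq_zero.mp (hgap_zero n) with h | h
          · exact h
          · exact absurd h hrn
        have : lam n = lam 0 := by linarith
        rw [this]
    -- conclude the eigen-identity
    intro v
    have hsum3 : HasSum (fun n => ⟪w, B n⟫_ℂ * ⟪(B n : V), v⟫_ℂ) ⟪w, v⟫_ℂ :=
      B.hasSum_inner_mul_inner w v
    have hsum4 : HasSum (fun n => (lam 0 : ℂ) * (⟪i w, b n⟫_ℂ * ⟪(b n : H), i v⟫_ℂ))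
        ((lam 0 : ℂ) * ⟪i w, i v⟫_ℂ) :=
      (b.hasSum_inner_mul_inner (i w) (i v)).mul_left _
    have hterm3 : (fun n => ⟪w, B n⟫_ℂ * ⟪(B n : V), v⟫_ℂ)
        = fun n => (lam 0 : ℂ) * (⟪i w, b n⟫_ℂ * ⟪(b n : H), i v⟫_ℂ) := by
      funext n
      have h1 : ⟪w, B n⟫_ℂ = (s n)⁻¹ * ((lam n : ℂ) * (starRingEnd ℂ) (c n)) := by
        rw [← inner_conj_symm w (B n), hBw n]
        simp [hs, map_mul]
      have h2 : ⟪(B n : V), v⟫_ℂ = (s n)⁻¹ * ((lam n : ℂ) * ⟪(b n : H), i v⟫_ℂ) := by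
        rw [hB]; exact hinner_e n v
      have h3 : ⟪i w, b n⟫_ℂ = (starRingEnd ℂ) (c n) := by
        rw [← inner_conj_symm (i w) (b n)]
      have hssq : (s n)⁻¹ * (s n)⁻¹ * (lam n : ℂ) = 1 := by
        rw [← hs_sq n, ← mul_inv]
        exact inv_mul_cancel₀ (mul_ne_zero (hs_ne n) (hs_ne n))
      have hkeyc : (lam n : ℂ) * (starRingEnd ℂ) (c n) = (lam 0 : ℂ) * (starRingEnd ℂ) (c n) := by
        have := congrArg (starRingEnd ℂ) (hkey n)
        simpa [map_mul, Complex.conj_ofReal] using this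
      rw [h1, h2, h3]
      calc (s n)⁻¹ * ((lam n : ℂ) * (starRingEnd ℂ) (c n))
            * ((s n)⁻¹ * ((lam n : ℂ) * ⟪(b n : H), i v⟫_ℂ))
          = ((s n)⁻¹ * (s n)⁻¹ * (lam n : ℂ))
            * ((lam n : ℂ) * (starRingEnd ℂ) (c n) * ⟪(b n : H), i v⟫_ℂ) := by ring
        _ = (lam n : ℂ) * (starRingEnd ℂ) (c n) * ⟪(b n : H), i v⟫_ℂ := by
            rw [hssq, one_mul]
        _ = (lam 0 : ℂ) * ((starRingEnd ℂ) (c n) * ⟪(b n : H), i v⟫_ℂ) := by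
            rw [hkeyc]; ring
    rw [hterm3] at hsum3
    exact hsum3.unique hsum4
end

section
/- Let V and H be infinite-dimensional separable complex Hilbert spaces, let i : V → H be an injective, compact, continuous linear map with dense range, and let (λ_n)_{n≥1}, (u_n)_{n≥1} be a spectral system for (V, H, i). Then the generalized Courant–Fischer–Weyl min-max principle holds: for every n ≥ 2, λ_n = max over all (n−1)-dimensional linear subspaces W of V of inf{‖u‖²_V : u ∈ V, ‖i u‖_H = 1, ⟪u, w⟫_V = 0 for all w ∈ W}. -/
/-!
The eigenvectors `u k` are `V`-orthogonal with `‖u k‖² = λ_k`, and `⟪u k, w⟫ = λ_k ⟪i u k, i w⟫`.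
If `w` is orthogonal to `u 0, …, u (n-1)` and `‖i w‖ = 1`, Bessel's inequality for `u k / √λ_k`
and Parseval's identity for the basis `i u k` give `‖w‖² ≥ ∑_{k ≥ n} λ_k |⟪i u k, i w⟫|² ≥ λ_n`,
with equality at `w = u n`. Conversely, any `n`-dimensional `W` is orthogonal to some `x ≠ 0` in
the span of `u 0, …, u n`, and there `‖x‖² ≤ λ_n ‖i x‖²`.
-/

open scoped InnerProductSpace

open Module Submodule

section OrthogonalFamily

variable {𝕜 E ι : Type*} [RCLike 𝕜] [NormedAddCommGroup E] [InnerProductSpace 𝕜 E]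
  {v : ι → E} {μ : ι → ℝ}

theorem norm_sum_smul_sq_of_inner_eq_ite [DecidableEq ι]
    (h : ∀ j k, ⟪v j, v k⟫_𝕜 = if j = k then (μ j : 𝕜) else 0) (s : Finset ι) (a : ι → 𝕜) :
    ‖∑ k ∈ s, a k • v k‖ ^ 2 = ∑ k ∈ s, ‖a k‖ ^ 2 * μ k := by
  rw [← inner_self_eq_norm_sq (𝕜 := 𝕜)]
  simp only [sum_inner, inner_sum, inner_smul_left, inner_smul_right, h, mul_ite, mul_zero,
    Finset.sum_ite_eq', map_sum]
  refine Finset.sum_congr rfl fun k hk ↦ ?_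
  rw [if_pos hk, ← mul_assoc, RCLike.mul_conj, ← RCLike.ofReal_pow, ← RCLike.ofReal_mul,
    RCLike.ofReal_re]

theorem Orthonormal.norm_sum_smul_sq (hv : Orthonormal 𝕜 v) (s : Finset ι) (a : ι → 𝕜) :
    ‖∑ k ∈ s, a k • v k‖ ^ 2 = ∑ k ∈ s, ‖a k‖ ^ 2 := by
  classical
  simpa using norm_sum_smul_sq_of_inner_eq_ite (μ := 1)
    (by simpa using orthonormal_iff_ite.mp hv) s a

/-- Bessel's inequality for the orthonormal family `v k / √(μ k)`. -/
theorem sum_norm_inner_sq_div_le_of_inner_eq_ite [DecidableEq ι] (hμ : ∀ k, 0 < μ k)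
    (h : ∀ j k, ⟪v j, v k⟫_𝕜 = if j = k then (μ j : 𝕜) else 0) (s : Finset ι) (x : E) :
    ∑ k ∈ s, ‖⟪v k, x⟫_𝕜‖ ^ 2 / μ k ≤ ‖x‖ ^ 2 := by
  have he : Orthonormal 𝕜 fun k ↦ ((√(μ k) : ℝ) : 𝕜)⁻¹ • v k := by
    rw [orthonormal_iff_ite]
    intro j k
    simp only [inner_smul_left, inner_smul_right, h, map_inv₀, RCLike.conj_ofReal]
    split_ifs with hjk
    · subst hjk
      rw [← RCLike.ofReal_inv, ← RCLike.ofReal_mul, ← RCLike.ofReal_mul, ← mul_assoc, ← mul_inv,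
        Real.mul_self_sqrt (hμ j).le, inv_mul_cancel₀ (hμ j).ne', RCLike.ofReal_one]
    · simp
  convert he.sum_inner_products_le x (s := s) using 2 with k
  rw [inner_smul_left, norm_mul, map_inv₀, RCLike.conj_ofReal, norm_inv, RCLike.norm_ofReal,
    abs_of_nonneg (Real.sqrt_nonneg _), mul_pow, inv_pow, Real.sq_sqrt (hμ k).le, div_eq_inv_mul]

end OrthogonalFamily

theorem HilbertBasis.hasSum_norm_inner_sq {𝕜 E ι : Type*} [RCLike 𝕜] [NormedAddCommGroup E]
    [InnerProductSpace 𝕜 E] (b : HilbertBasis ι 𝕜 E) (x : E) :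
    HasSum (fun k ↦ ‖⟪b k, x⟫_𝕜‖ ^ 2) (‖x‖ ^ 2) := by
  have := RCLike.hasSum_re 𝕜 (b.hasSum_inner_mul_inner x x)
  rw [inner_self_eq_norm_sq] at this
  convert this using 2 with k
  rw [← inner_conj_symm x (b k), RCLike.conj_mul, ← RCLike.ofReal_pow, RCLike.ofReal_re]

theorem exists_ne_zero_map_mem_orthogonal {𝕜 E M : Type*} [RCLike 𝕜] [NormedAddCommGroup E]
    [InnerProductSpace 𝕜 E] [AddCommGroup M] [Module 𝕜 M] [FiniteDimensional 𝕜 M]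
    (W : Submodule 𝕜 E) [FiniteDimensional 𝕜 W] (f : M →ₗ[𝕜] E)
    (h : finrank 𝕜 W < finrank 𝕜 M) : ∃ a ≠ 0, f a ∈ Wᗮ := by
  obtain ⟨a, ha, ha0⟩ := (Submodule.ne_bot_iff _).mp <|
    (W.orthogonalProjectionOnto.toLinearMap ∘ₗ f).ker_ne_bot_of_finrank_lt h
  exact ⟨a, ha0, orthogonalProjectionOnto_eq_zero_iff.mp ha⟩

section RayleighValues

variable {V H : Type*} [NormedAddCommGroup V] [InnerProductSpace ℂ V]
  [NormedAddCommGroup H] [InnerProductSpace ℂ H]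

/-- The min-max quantity attached to `W` is `sInf (rayleighValues i W)`. -/
def rayleighValues (i : V →L[ℂ] H) (W : Submodule ℂ V) : Set ℝ :=
  {r : ℝ | ∃ w : V, ‖i w‖ = 1 ∧ (∀ v ∈ W, ⟪w, v⟫_ℂ = 0) ∧ r = ‖w‖ ^ 2}

theorem bddBelow_rayleighValues (i : V →L[ℂ] H) (W : Submodule ℂ V) :
    BddBelow (rayleighValues i W) :=
  ⟨0, by rintro r ⟨w, -, -, rfl⟩; positivity⟩

theorem exists_mem_rayleighValues_le_of_norm_sq_le {i : V →L[ℂ] H} {W : Submodule ℂ V} {x : V}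
    (hx : x ∈ Wᗮ) (hix : i x ≠ 0) {c : ℝ} (h : ‖x‖ ^ 2 ≤ c * ‖i x‖ ^ 2) :
    ∃ r ∈ rayleighValues i W, r ≤ c := by
  have ht : 0 < ‖i x‖ := norm_pos_iff.mpr hix
  refine ⟨_, ⟨((‖i x‖ : ℂ))⁻¹ • x, ?_, ?_, rfl⟩, ?_⟩
  · rw [map_smul, norm_smul, norm_inv, Complex.norm_real, norm_norm, inv_mul_cancel₀ ht.ne']
  · exact (mem_orthogonal' _ _).mp (Wᗮ.smul_mem _ hx)
  · rw [norm_smul, norm_inv, Complex.norm_real, norm_norm, mul_pow, inv_pow,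
      inv_mul_le_iff₀ (by positivity)]
    linarith

section SpectralSystem

variable {i : V →L[ℂ] H} {b : HilbertBasis ℕ ℂ H} {lam : ℕ → ℝ} {u : ℕ → V}

theorem inner_eigvec_eq_ite (hb : ∀ n, b n = i (u n))
    (heigen : ∀ n, ∀ v : V, ⟪u n, v⟫_ℂ = (lam n : ℂ) * ⟪i (u n), i v⟫_ℂ) (j k : ℕ) :
    ⟪u j, u k⟫_ℂ = if j = k then (lam j : ℂ) else 0 := by
  rw [heigen, ← hb, ← hb, orthonormal_iff_ite.mp b.orthonormal]
  split_ifs <;> simp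

theorem linearIndependent_eigvec (hb : ∀ n, b n = i (u n)) : LinearIndependent ℂ u :=
  .of_comp i.toLinearMap <| by
    have := b.orthonormal.linearIndependent
    rwa [show ⇑b = fun n ↦ i (u n) from funext hb] at this

theorem lam_mem_rayleighValues (hb : ∀ n, b n = i (u n))
    (heigen : ∀ n, ∀ v : V, ⟪u n, v⟫_ℂ = (lam n : ℂ) * ⟪i (u n), i v⟫_ℂ) (n : ℕ) :
    lam n ∈ rayleighValues i (span ℂ (Set.range fun k : Fin n ↦ u k)) := by
  have hspan : span ℂ (Set.range fun k : Fin n ↦ u k) ≤ (ℂ ∙ u n)ᗮ := by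
    rw [span_le]
    rintro _ ⟨k, rfl⟩
    rw [SetLike.mem_coe, mem_orthogonal_singleton_iff_inner_left,
      inner_eigvec_eq_ite hb heigen, if_neg k.isLt.ne]
  refine ⟨u n, by rw [← hb, b.orthonormal.1], fun v hv ↦ ?_, ?_⟩
  · exact mem_orthogonal_singleton_iff_inner_right.mp (hspan hv)
  · have := inner_self_eq_norm_sq (𝕜 := ℂ) (u n)
    rw [inner_eigvec_eq_ite hb heigen, if_pos rfl] at this
    simpa using this

theorem lam_le_of_mem_rayleighValues (hpos : ∀ n, 0 < lam n) (hmono : Monotone lam)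
    (hb : ∀ n, b n = i (u n))
    (heigen : ∀ n, ∀ v : V, ⟪u n, v⟫_ℂ = (lam n : ℂ) * ⟪i (u n), i v⟫_ℂ) {n : ℕ} {r : ℝ}
    (hr : r ∈ rayleighValues i (span ℂ (Set.range fun k : Fin n ↦ u k))) : lam n ≤ r := by
  obtain ⟨w, hiw, horth, rfl⟩ := hr
  set c : ℕ → ℂ := fun k ↦ ⟪b k, i w⟫_ℂ
  have hinner : ∀ k, ⟪u k, w⟫_ℂ = lam k * c k := fun k ↦ by rw [heigen, ← hb]
  have hc : ∀ k < n, c k = 0 := fun k hk ↦ by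
    have := inner_eq_zero_symm.mp (horth _ (subset_span ⟨⟨k, hk⟩, rfl⟩))
    rwa [hinner, mul_eq_zero, or_iff_right (by exact_mod_cast (hpos k).ne')] at this
  have hpartial : ∀ N, lam n * ∑ k ∈ Finset.range N, ‖c k‖ ^ 2 ≤ ‖w‖ ^ 2 := fun N ↦
    calc lam n * ∑ k ∈ Finset.range N, ‖c k‖ ^ 2
        ≤ ∑ k ∈ Finset.range N, lam k * ‖c k‖ ^ 2 := by
          rw [Finset.mul_sum]
          refine Finset.sum_le_sum fun k _ ↦ ?_
          rcases lt_or_ge k n with hk | hk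
          · simp [hc k hk]
          · exact mul_le_mul_of_nonneg_right (hmono hk) (by positivity)
      _ = ∑ k ∈ Finset.range N, ‖⟪u k, w⟫_ℂ‖ ^ 2 / lam k := by
          refine Finset.sum_congr rfl fun k _ ↦ ?_
          rw [hinner, norm_mul, Complex.norm_real, Real.norm_of_nonneg (hpos k).le]
          field_simp [(hpos k).ne']
      _ ≤ ‖w‖ ^ 2 := sum_norm_inner_sq_div_le_of_inner_eq_ite hpos
          (inner_eigvec_eq_ite hb heigen) _ w
  have hparseval := (b.hasSum_norm_inner_sq (i w)).tendsto_sum_nat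
  rw [hiw, one_pow] at hparseval
  simpa using le_of_tendsto' (hparseval.const_mul (lam n)) hpartial

theorem exists_mem_rayleighValues_le_lam (hmono : Monotone lam) (hb : ∀ n, b n = i (u n))
    (heigen : ∀ n, ∀ v : V, ⟪u n, v⟫_ℂ = (lam n : ℂ) * ⟪i (u n), i v⟫_ℂ) {n : ℕ}
    (W : Submodule ℂ V) [FiniteDimensional ℂ W] (hW : finrank ℂ W = n) :
    ∃ r ∈ rayleighValues i W, r ≤ lam n := by
  have hortho : ∀ j k : Fin (n + 1), ⟪u j, u k⟫_ℂ = if j = k then (lam j : ℂ) else 0 :=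
    fun j k ↦ by simp only [inner_eigvec_eq_ite hb heigen, Fin.val_inj]
  obtain ⟨a, ha, hx⟩ := exists_ne_zero_map_mem_orthogonal W
    (Fintype.linearCombination ℂ fun k : Fin (n + 1) ↦ u k) (by simp [hW])
  set x := Fintype.linearCombination ℂ (fun k : Fin (n + 1) ↦ u k) a
  have hxV : ‖x‖ ^ 2 = ∑ k, ‖a k‖ ^ 2 * lam k := by
    simp only [x, Fintype.linearCombination_apply, norm_sum_smul_sq_of_inner_eq_ite hortho]
  have hxH : ‖i x‖ ^ 2 = ∑ k, ‖a k‖ ^ 2 := by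
    simp only [x, Fintype.linearCombination_apply, map_sum, map_smul, ← hb]
    exact (b.orthonormal.comp _ Fin.val_injective).norm_sum_smul_sq _ _
  have hix : i x ≠ 0 := by
    obtain ⟨k, hk⟩ := Function.ne_iff.mp ha
    rw [← norm_ne_zero_iff, ← pow_ne_zero_iff two_ne_zero, hxH]
    exact (Finset.sum_pos' (fun _ _ ↦ by positivity)
      ⟨k, Finset.mem_univ _, pow_pos (norm_pos_iff.mpr hk) 2⟩).ne'
  refine exists_mem_rayleighValues_le_of_norm_sq_le hx hix ?_
  rw [hxV, hxH, Finset.mul_sum]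
  exact Finset.sum_le_sum fun k _ ↦ by
    rw [mul_comm (lam n)]
    exact mul_le_mul_of_nonneg_left (hmono (Nat.lt_succ_iff.mp k.isLt)) (by positivity)

end SpectralSystem

end RayleighValues

/-- Indexing starts at `0`: `lam n` and `u n` are the paper's `λ_{n+1}` and `u_{n+1}`. -/
theorem courant_fischer_weyl_minmax_general
    {V H : Type*}
    [NormedAddCommGroup V] [InnerProductSpace ℂ V]
    [NormedAddCommGroup H] [InnerProductSpace ℂ H]
    (i : V →L[ℂ] H)
    (lam : ℕ → ℝ) (u : ℕ → V)
    (hmono : Monotone lam) (hpos : ∀ n, 0 < lam n)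
    (hbasis : ∃ b : HilbertBasis ℕ ℂ H, ∀ n, b n = i (u n))
    (heigen : ∀ n, ∀ v : V, ⟪u n, v⟫_ℂ = (lam n : ℂ) * ⟪i (u n), i v⟫_ℂ) :
    ∀ n : ℕ, 1 ≤ n →
      IsGreatest
        {c : ℝ | ∃ W : Submodule ℂ V, Module.finrank ℂ W = n ∧
          c = sInf {r : ℝ | ∃ w : V, ‖i w‖ = 1 ∧ (∀ v ∈ W, ⟪w, v⟫_ℂ = 0) ∧ r = ‖w‖ ^ 2}}
        (lam n) := by
  intro n hn
  obtain ⟨b, hb⟩ := hbasis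
  constructor
  · refine ⟨span ℂ (Set.range fun k : Fin n ↦ u k), ?_, ?_⟩
    · exact (finrank_span_eq_card ((linearIndependent_eigvec hb).comp _ Fin.val_injective)).trans
        (Fintype.card_fin n)
    · exact (IsLeast.csInf_eq ⟨lam_mem_rayleighValues hb heigen n,
        fun _ ↦ lam_le_of_mem_rayleighValues hpos hmono hb heigen⟩).symm
  · rintro _ ⟨W, hW, rfl⟩
    have : FiniteDimensional ℂ W := Module.finite_of_finrank_pos (by omega)
    obtain ⟨r, hr, hle⟩ := exists_mem_rayleighValues_le_lam hmono hb heigen W hW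
    exact (csInf_le (bddBelow_rayleighValues i W) hr).trans hle

/-- **Generalized Courant–Fischer–Weyl min-max principle** (formula (16) of Theorem 2 of the
paper). Given a spectral system `(lam, u)` for `(V, H, i)` (here indexed from `0`, so `lam n`
is the paper's `λ_{n+1}`), for every `n ≥ 1` the eigenvalue `lam n` is the maximum, over all
`n`-dimensional linear subspaces `W` of `V`, of
`inf {‖u‖²_V : u ∈ V, ‖i u‖_H = 1, ⟪u, w⟫_V = 0 for all w ∈ W}`. -/
theorem courant_fischer_weyl_minmax
    {V H : Type*}
    [NormedAddCommGroup V] [InnerProductSpace ℂ V] [CompleteSpace V]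
    [NormedAddCommGroup H] [InnerProductSpace ℂ H] [CompleteSpace H]
    [TopologicalSpace.SeparableSpace V] [TopologicalSpace.SeparableSpace H]
    (hVinf : ¬ FiniteDimensional ℂ V) (hHinf : ¬ FiniteDimensional ℂ H)
    (i : V →L[ℂ] H) (hinj : Function.Injective i)
    (hcomp : IsCompactOperator i) (hdense : DenseRange i)
    (lam : ℕ → ℝ) (u : ℕ → V)
    (hmono : Monotone lam) (hpos : ∀ n, 0 < lam n)
    (htend : Filter.Tendsto lam Filter.atTop Filter.atTop)
    (hbasis : ∃ b : HilbertBasis ℕ ℂ H, ∀ n, b n = i (u n))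
    (heigen : ∀ n, ∀ v : V, ⟪u n, v⟫_ℂ = (lam n : ℂ) * ⟪i (u n), i v⟫_ℂ) :
    ∀ n : ℕ, 1 ≤ n →
      IsGreatest
        {c : ℝ | ∃ W : Submodule ℂ V, Module.finrank ℂ W = n ∧
          c = sInf {r : ℝ | ∃ w : V, ‖i w‖ = 1 ∧ (∀ v ∈ W, ⟪w, v⟫_ℂ = 0) ∧ r = ‖w‖ ^ 2}}
        (lam n) :=
  courant_fischer_weyl_minmax_general i lam u hmono hpos hbasis heigen
end

section
/- Let N ≥ 2 be an integer, 0 < R₁ < R₂ and λ > 0 be real numbers, and let w : [R₁, R₂] → ℝ be continuously differentiable on [R₁, R₂] and twice differentiable on (R₁, R₂), satisfying −w''(ρ) − (N−1)ρ⁻¹ w'(ρ) = λ w(ρ) for all ρ ∈ (R₁, R₂), together with −w'(R₁) = λ w(R₁) and w(R₂) = 0. If w(ρ) > 0 for all ρ ∈ [R₁, R₂), then w'(ρ) < 0 for every ρ ∈ [R₁, R₂]; in particular w is strictly decreasing on [R₁, R₂]. -/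
open Set

/-- **Strict monotonicity of the positive radial principal eigenfunction**
(concluding assertion of Theorem 5 of the paper).
If `w` is `C¹` on `[R₁, R₂]`, twice differentiable on `(R₁, R₂)`, satisfies the radial ODE
`−w'' − (N−1)ρ⁻¹ w' = λ w` on `(R₁, R₂)` with `λ > 0`, the boundary conditions
`−w'(R₁) = λ w(R₁)` and `w(R₂) = 0`, and `w > 0` on `[R₁, R₂)`, then `w' < 0` on `[R₁, R₂]`;
in particular `w` is strictly decreasing on `[R₁, R₂]`. -/
theorem radial_eigenfunction_strictly_decreasing
    (N : ℕ) (hN : 2 ≤ N) (R₁ R₂ lam : ℝ) (hR₁ : 0 < R₁) (hR : R₁ < R₂) (hlam : 0 < lam)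
    (w : ℝ → ℝ)
    (hw1 : ∀ ρ ∈ Icc R₁ R₂, DifferentiableAt ℝ w ρ)
    (hw1' : ContinuousOn (deriv w) (Icc R₁ R₂))
    (hw2 : ∀ ρ ∈ Ioo R₁ R₂, DifferentiableAt ℝ (deriv w) ρ)
    (hode : ∀ ρ ∈ Ioo R₁ R₂,
      -(deriv (deriv w) ρ) - ((N : ℝ) - 1) * ρ⁻¹ * deriv w ρ = lam * w ρ)
    (hbc₁ : -(deriv w R₁) = lam * w R₁)
    (hbc₂ : w R₂ = 0)
    (hpos : ∀ ρ ∈ Ico R₁ R₂, 0 < w ρ) :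
    (∀ ρ ∈ Icc R₁ R₂, deriv w ρ < 0) ∧ StrictAntiOn w (Icc R₁ R₂) := by
  set g : ℝ → ℝ := fun ρ => ρ ^ (N - 1) * deriv w ρ with hg
  -- derivative of g on the interior
  have hgderiv : ∀ ρ ∈ Ioo R₁ R₂, HasDerivAt g (-(lam * ρ ^ (N - 1) * w ρ)) ρ := by
    intro ρ hρ
    have hρ0 : (0:ℝ) < ρ := lt_trans hR₁ hρ.1
    have hρne : ρ ≠ 0 := ne_of_gt hρ0
    have hd : HasDerivAt g
        ((↑(N - 1) * ρ ^ (N - 1 - 1)) * deriv w ρ + ρ ^ (N - 1) * deriv (deriv w) ρ) ρ :=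
      (hasDerivAt_pow (N - 1) ρ).mul ((hw2 ρ hρ).hasDerivAt)
    convert hd using 1
    have hode' := hode ρ hρ
    have hw'' : deriv (deriv w) ρ = -(((N : ℝ) - 1) * ρ⁻¹ * deriv w ρ) - lam * w ρ := by
      linarith
    have hcast : ((N - 1 : ℕ) : ℝ) = (N : ℝ) - 1 := by
      have h1 : (1:ℕ) ≤ N := le_trans (by norm_num) hN
      push_cast [Nat.cast_sub h1]
      ring
    have hNpow : ρ ^ (N - 1) = ρ ^ (N - 1 - 1) * ρ := by
      rw [← pow_succ]
      congr 1
      omega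
    rw [hw'', hcast, hNpow]
    field_simp
    ring
  -- g is strictly antitone on Icc
  have hwcont : ContinuousOn w (Icc R₁ R₂) := fun x hx => (hw1 x hx).continuousAt.continuousWithinAt
  have hgcont : ContinuousOn g (Icc R₁ R₂) :=
    (continuousOn_pow (N - 1)).mul hw1'
  have hganti : StrictAntiOn g (Icc R₁ R₂) := by
    apply strictAntiOn_of_deriv_neg (convex_Icc R₁ R₂) hgcont
    intro x hx
    rw [interior_Icc] at hx
    rw [(hgderiv x hx).deriv]
    have hx0 : (0:ℝ) < x := lt_trans hR₁ hx.1
    have := hpos x ⟨le_of_lt hx.1, hx.2⟩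
    have hp : (0:ℝ) < x ^ (N - 1) := pow_pos hx0 _
    nlinarith [mul_pos (mul_pos hlam hp) this]
  -- g(R₁) < 0
  have hwR₁ : 0 < w R₁ := hpos R₁ ⟨le_refl _, hR⟩
  have hgR₁ : g R₁ < 0 := by
    have : deriv w R₁ = -(lam * w R₁) := by linarith
    have hp : (0:ℝ) < R₁ ^ (N - 1) := pow_pos hR₁ _
    simp only [hg, this]
    nlinarith [mul_pos hp (mul_pos hlam hwR₁)]
  -- hence g < 0 on all of Icc
  have hgneg : ∀ ρ ∈ Icc R₁ R₂, g ρ < 0 := by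
    intro ρ hρ
    rcases eq_or_lt_of_le hρ.1 with h | h
    · rwa [← h]
    · exact lt_trans (hganti (left_mem_Icc.mpr (le_of_lt hR)) hρ h) hgR₁
  have hderivneg : ∀ ρ ∈ Icc R₁ R₂, deriv w ρ < 0 := by
    intro ρ hρ
    have hρ0 : (0:ℝ) < ρ := lt_of_lt_of_le hR₁ hρ.1
    have hp : (0:ℝ) < ρ ^ (N - 1) := pow_pos hρ0 _
    have := hgneg ρ hρ
    simp only [hg] at this
    nlinarith
  refine ⟨hderivneg, ?_⟩
  apply strictAntiOn_of_deriv_neg (convex_Icc R₁ R₂) hwcont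
  intro x hx
  rw [interior_Icc] at hx
  exact hderivneg x ⟨le_of_lt hx.1, le_of_lt hx.2⟩
end
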